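/- Let G be a Kan cubical monoid with unit 1 as basepoint and n ≥ 1. Then the homotopy multiplication agrees with the pointwise monoid multiplication: if x, y, x', y' ∈ \tilde G_n with x ∼ x' and y ∼ y', then xy ∼ x'y'; and for any x, y ∈ \tilde G_n and any Kan filler z ∈ G_{n+1} with ∂_1^0 z = x, ∂_2^1 z = y and ∂_j^ε z = 1 for all other (j,ε) with (j,ε) ≠ (1,1), one has ∂_1^1 z ∼ xy. In other words, [x] • [y] = [xy] in π_n(G), where • is the homotopy group operation. -/

import Mathlib

universe u

/-- The Kan condition for a cubical set, given by its family of sets and face maps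
(`d n j ε : X (n+1) → X n` is the face `∂_j^ε`, `1 ≤ j ≤ n+1`). -/
def IsKan (X : ℕ → Type u) (d : ∀ n : ℕ, ℕ → Bool → X (n + 1) → X n) : Prop :=
  (∀ (i : ℕ) (α : Bool), 1 ≤ i → i ≤ 1 → ∀ x : ℕ → Bool → X 0,
    ∃ z : X 1, ∀ (j : ℕ) (ε : Bool), 1 ≤ j → j ≤ 1 → (j, ε) ≠ (i, α) → d 0 j ε z = x j ε) ∧
  (∀ (n i : ℕ) (α : Bool), 1 ≤ i → i ≤ n + 2 → ∀ x : ℕ → Bool → X (n + 1),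
    (∀ (j k : ℕ) (ε ω : Bool), 1 ≤ j → j < k → k ≤ n + 2 →
      (j, ε) ≠ (i, α) → (k, ω) ≠ (i, α) → d n j ε (x k ω) = d n (k - 1) ω (x j ε)) →
    ∃ z : X (n + 2), ∀ (j : ℕ) (ε : Bool), 1 ≤ j → j ≤ n + 2 → (j, ε) ≠ (i, α) →
      d (n + 1) j ε z = x j ε)

/-- `\tilde G_n`: the set of `n`-cubes all of whose faces are the unit. -/
def cubTilde (G : ℕ → Type u) [∀ n, Monoid (G n)]
    (d : ∀ n : ℕ, ℕ → Bool → (G (n + 1) →* G n)) : ∀ n, Set (G n)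
  | 0 => Set.univ
  | (n + 1) => {x | ∀ (j : ℕ) (ε : Bool), 1 ≤ j → j ≤ n + 1 → d n j ε x = 1}

/-- The homotopy relation `x ∼ y` on `\tilde G_n`. -/
def cubRel (G : ℕ → Type u) [∀ n, Monoid (G n)]
    (d : ∀ n : ℕ, ℕ → Bool → (G (n + 1) →* G n)) (n : ℕ) (x y : G n) : Prop :=
  ∃ z : G (n + 1), d n 1 false z = x ∧ d n 1 true z = y ∧
    ∀ (j : ℕ) (ε : Bool), 2 ≤ j → j ≤ n + 1 → d n j ε z = 1

/-!
The product of two homotopies is a homotopy, which gives the first claim. For the second, two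
Kan fillers `z`, `z'` for the same pair `(x, y)` have homotopic faces `∂_1^1 z ∼ ∂_1^1 z'`: fill
an `(n + 3)`-box with `z`, `z'` at `(1, 0)`, `(1, 1)`, `s_1 x` at `(2, 0)`,
`s_1 y` at `(3, 1)` and units elsewhere; its missing face `(2, 1)` is the homotopy. It remains
to produce one filler with `∂_1^1 = xy`. Filling the box with two copies of any filler for
`(1, y)` at `(1, 1)` and `(2, 1)` yields, as its face `(3, 1)`, a filler `c` for `(1, y)` with
`∂_1^1 c = y`, and then `s_1 x · c` is a filler for `(x, y)` with `∂_1^1 = xy`.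
-/

variable {G : ℕ → Type u} [∀ n, Monoid (G n)] {d : ∀ n : ℕ, ℕ → Bool → (G (n + 1) →* G n)}
  {s : ∀ n : ℕ, ℕ → (G n →* G (n + 1))}

theorem one_mem_cubTilde_succ (n : ℕ) : (1 : G (n + 1)) ∈ cubTilde G d (n + 1) :=
  fun _ _ _ _ => map_one _

theorem cubRel.mul {n : ℕ} {x x' y y' : G n} (hx : cubRel G d n x x') (hy : cubRel G d n y y') :
    cubRel G d n (x * y) (x' * y') := by
  obtain ⟨u, hu₀, hu₁, hu⟩ := hx
  obtain ⟨v, hv₀, hv₁, hv⟩ := hy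
  refine ⟨u * v, by rw [map_mul, hu₀, hv₀], by rw [map_mul, hu₁, hv₁], fun j ε hj hjn => ?_⟩
  rw [map_mul, hu j ε hj hjn, hv j ε hj hjn, one_mul]

theorem IsKan.exists_filler (hkan : IsKan G fun n i ε x => d n i ε x) {n i : ℕ} (α : Bool)
    (hi : 1 ≤ i) (hin : i ≤ n + 2) (box : ℕ → Bool → G (n + 1))
    (hbox : ∀ (j k : ℕ) (ε ω : Bool), 1 ≤ j → j < k → k ≤ n + 2 → (j, ε) ≠ (i, α) →
      (k, ω) ≠ (i, α) → d n j ε (box k ω) = d n (k - 1) ω (box j ε)) :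
    ∃ z : G (n + 2), ∀ (j : ℕ) (ε : Bool), 1 ≤ j → j ≤ n + 2 → (j, ε) ≠ (i, α) →
      d (n + 1) j ε z = box j ε :=
  hkan.2 n i α hi hin box hbox

/-- `z` is a Kan filler exhibiting `[x] • [y] = [∂_1^1 z]`. -/
structure IsProductFiller (d : ∀ n : ℕ, ℕ → Bool → (G (n + 1) →* G n)) (n : ℕ)
    (x y : G (n + 1)) (z : G (n + 2)) : Prop where
  face_one_false : d (n + 1) 1 false z = x
  face_two_false : d (n + 1) 2 false z = 1
  face_two_true : d (n + 1) 2 true z = y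
  face_of_three_le : ∀ (j : ℕ) (ε : Bool), 3 ≤ j → j ≤ n + 2 → d (n + 1) j ε z = 1

theorem exists_isProductFiller (hkan : IsKan G fun n i ε x => d n i ε x) {n : ℕ}
    {x y : G (n + 1)} (hx : x ∈ cubTilde G d (n + 1)) (hy : y ∈ cubTilde G d (n + 1)) :
    ∃ z, IsProductFiller d n x y z := by
  let box : ℕ → Bool → G (n + 1) := fun k ω =>
    if (k, ω) = (1, false) then x else if (k, ω) = (2, true) then y else 1
  have box_mem : ∀ k ω, box k ω ∈ cubTilde G d (n + 1) := by
    intro k ω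
    simp only [box]
    split_ifs
    exacts [hx, hy, one_mem_cubTilde_succ n]
  obtain ⟨z, hz⟩ := hkan.exists_filler true le_rfl (by omega) box fun j k ε ω hj hjk hk _ _ => by
    rw [box_mem k ω j ε hj (by omega), box_mem j ε (k - 1) ω (by omega) (by omega)]
  refine ⟨z, ?_, ?_, ?_, fun j ε hj hjn => ?_⟩
  · simpa [box] using hz 1 false le_rfl (by omega) (by simp)
  · simpa [box] using hz 2 false (by omega) (by omega) (by simp)
  · simpa [box] using hz 2 true (by omega) (by omega) (by simp)
  · simpa [box, show j ≠ 1 by omega, show j ≠ 2 by omega] using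
      hz j ε (by omega) hjn (by simp; omega)

theorem exists_isProductFiller_one_and_face_eq
    (hdd : ∀ (n i j : ℕ) (α ε : Bool), 1 ≤ i → i < j → j ≤ n + 2 →
      ∀ x, d n i α (d (n + 1) j ε x) = d n (j - 1) ε (d (n + 1) i α x))
    (hkan : IsKan G fun n i ε x => d n i ε x) {n : ℕ} {y : G (n + 1)}
    (hy : y ∈ cubTilde G d (n + 1)) :
    ∃ c, IsProductFiller d n 1 y c ∧ d (n + 1) 1 true c = y := by
  obtain ⟨z, hz⟩ := exists_isProductFiller hkan (one_mem_cubTilde_succ n) hy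
  let box : ℕ → Bool → G (n + 2) := fun k ω => if (k = 1 ∨ k = 2) ∧ ω = true then z else 1
  obtain ⟨W, hW⟩ := hkan.exists_filler (n := n + 1) (i := 3) true (by omega) (by omega) box <| by
    intro j k ε ω hj hjk hk hjα hkα
    rcases show j = 1 ∨ j = 2 ∨ 3 ≤ j by omega with rfl | rfl | hj3 <;>
    rcases show k = 2 ∨ k = 3 ∨ 4 ≤ k by omega with rfl | rfl | hk4 <;>
    cases ε <;> cases ω <;>
    simp (disch := omega) [box, if_neg, hz.face_one_false, hz.face_two_false,
      hz.face_of_three_le] at hjα hkα ⊢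
  have face_low : ∀ i ε, (i = 1 ∨ i = 2) →
      d (n + 1) i ε (d (n + 2) 3 true W) = if ε then y else 1 := by
    rintro i ε hi
    rw [hdd (n + 1) i 3 ε true (by omega) (by omega) (by omega),
      hW i ε (by omega) (by omega) (by simp; omega)]
    cases ε
    · simp [box]
    · simp [box, hi, hz.face_two_true]
  refine ⟨d (n + 2) 3 true W, ⟨face_low 1 false (by simp), face_low 2 false (by simp),
    face_low 2 true (by simp), fun j ε hj hjn => ?_⟩, face_low 1 true (by simp)⟩
  rw [← Nat.add_sub_cancel j 1, ← hdd (n + 1) 3 (j + 1) true ε (by omega) (by omega) (by omega),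
    hW (j + 1) ε (by omega) (by omega) (by simp; omega)]
  simp (disch := omega) [box, if_neg]

theorem face_degen_one_eq_one
    (hds_gt : ∀ (n i j : ℕ) (α : Bool), 1 ≤ j → j < i → i ≤ n + 2 →
      ∀ x, d (n + 1) i α (s (n + 1) j x) = s n j (d n (i - 1) α x))
    {n j : ℕ} (ε : Bool) {x : G (n + 1)} (hx : x ∈ cubTilde G d (n + 1)) (hj : 2 ≤ j)
    (hjn : j ≤ n + 2) : d (n + 1) j ε (s (n + 1) 1 x) = 1 := by
  rw [hds_gt n j 1 ε le_rfl hj hjn, hx (j - 1) ε (by omega) (by omega), map_one]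

theorem IsProductFiller.degen_mul
    (hds_eq : ∀ (n i : ℕ) (α : Bool), 1 ≤ i → i ≤ n + 1 → ∀ x, d n i α (s n i x) = x)
    (hds_gt : ∀ (n i j : ℕ) (α : Bool), 1 ≤ j → j < i → i ≤ n + 2 →
      ∀ x, d (n + 1) i α (s (n + 1) j x) = s n j (d n (i - 1) α x))
    {n : ℕ} {x y : G (n + 1)} {c : G (n + 2)} (hx : x ∈ cubTilde G d (n + 1))
    (hc : IsProductFiller d n 1 y c) : IsProductFiller d n x y (s (n + 1) 1 x * c) where
  face_one_false := by rw [map_mul, hds_eq _ 1 _ le_rfl (by omega), hc.face_one_false, mul_one]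
  face_two_false := by
    rw [map_mul, face_degen_one_eq_one hds_gt _ hx le_rfl (by omega), hc.face_two_false, one_mul]
  face_two_true := by
    rw [map_mul, face_degen_one_eq_one hds_gt _ hx le_rfl (by omega), hc.face_two_true, one_mul]
  face_of_three_le j ε hj hjn := by
    rw [map_mul, face_degen_one_eq_one hds_gt _ hx (by omega) hjn, hc.face_of_three_le j ε hj hjn,
      one_mul]

theorem cubRel_face_one_true_of_isProductFiller
    (hdd : ∀ (n i j : ℕ) (α ε : Bool), 1 ≤ i → i < j → j ≤ n + 2 →
      ∀ x, d n i α (d (n + 1) j ε x) = d n (j - 1) ε (d (n + 1) i α x))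
    (hds_eq : ∀ (n i : ℕ) (α : Bool), 1 ≤ i → i ≤ n + 1 → ∀ x, d n i α (s n i x) = x)
    (hds_gt : ∀ (n i j : ℕ) (α : Bool), 1 ≤ j → j < i → i ≤ n + 2 →
      ∀ x, d (n + 1) i α (s (n + 1) j x) = s n j (d n (i - 1) α x))
    (hkan : IsKan G fun n i ε x => d n i ε x) {n : ℕ} {x y : G (n + 1)} {z z' : G (n + 2)}
    (hx : x ∈ cubTilde G d (n + 1)) (hy : y ∈ cubTilde G d (n + 1))
    (hz : IsProductFiller d n x y z) (hz' : IsProductFiller d n x y z') :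
    cubRel G d (n + 1) (d (n + 1) 1 true z) (d (n + 1) 1 true z') := by
  let box : ℕ → Bool → G (n + 2) := fun k ω =>
    if k = 1 then (if ω then z' else z) else if (k, ω) = (2, false) then s (n + 1) 1 x
    else if (k, ω) = (3, true) then s (n + 1) 1 y else 1
  have hs : ∀ (ε : Bool) (a : G (n + 1)), d (n + 1) 1 ε (s (n + 1) 1 a) = a :=
    fun ε a => hds_eq _ 1 ε le_rfl (by omega) a
  have hsx := fun j ε => face_degen_one_eq_one hds_gt (j := j) ε hx
  have hsy := fun j ε => face_degen_one_eq_one hds_gt (j := j) ε hy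
  obtain ⟨W, hW⟩ := hkan.exists_filler (n := n + 1) (i := 2) true (by omega) (by omega) box <| by
    intro j k ε ω hj hjk hk hjα hkα
    rcases show j = 1 ∨ j = 2 ∨ j = 3 ∨ 4 ≤ j by omega with rfl | rfl | rfl | hj4 <;>
    rcases show k = 2 ∨ k = 3 ∨ 4 ≤ k by omega with rfl | rfl | hk4 <;>
    cases ε <;> cases ω <;>
    simp (disch := omega) [box, if_neg, hs, hsx, hsy, hz.face_one_false, hz.face_two_false,
      hz.face_two_true, hz.face_of_three_le, hz'.face_one_false, hz'.face_two_false,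
      hz'.face_two_true, hz'.face_of_three_le] at hjα hkα ⊢
  refine ⟨d (n + 2) 2 true W, ?_, ?_, fun j ε hj hjn => ?_⟩
  · rw [hdd (n + 1) 1 2 false true le_rfl (by omega) (by omega),
      hW 1 false le_rfl (by omega) (by simp)]
    rfl
  · rw [hdd (n + 1) 1 2 true true le_rfl (by omega) (by omega),
      hW 1 true le_rfl (by omega) (by simp)]
    rfl
  · rw [← Nat.add_sub_cancel j 1, ← hdd (n + 1) 2 (j + 1) true ε (by omega) (by omega) (by omega),
      hW (j + 1) ε (by omega) (by omega) (by simp; omega)]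
    simp (disch := omega) only [box, if_neg, Prod.mk.injEq]
    split_ifs
    exacts [hsy 2 true le_rfl (by omega), map_one _]

theorem stmt4_general (G : ℕ → Type u) [∀ n, Monoid (G n)]
    (d : ∀ n : ℕ, ℕ → Bool → (G (n + 1) →* G n))
    (s : ∀ n : ℕ, ℕ → (G n →* G (n + 1)))
    (hdd : ∀ (n i j : ℕ) (α ε : Bool), 1 ≤ i → i < j → j ≤ n + 2 →
      ∀ x, d n i α (d (n + 1) j ε x) = d n (j - 1) ε (d (n + 1) i α x))
    (hds_eq : ∀ (n i : ℕ) (α : Bool), 1 ≤ i → i ≤ n + 1 → ∀ x, d n i α (s n i x) = x)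
    (hds_gt : ∀ (n i j : ℕ) (α : Bool), 1 ≤ j → j < i → i ≤ n + 2 →
      ∀ x, d (n + 1) i α (s (n + 1) j x) = s n j (d n (i - 1) α x))
    (hkan : IsKan G (fun n i ε x => d n i ε x)) (n : ℕ) :
    (∀ x x' y y' : G (n + 1),
      x ∈ cubTilde G d (n + 1) → x' ∈ cubTilde G d (n + 1) →
      y ∈ cubTilde G d (n + 1) → y' ∈ cubTilde G d (n + 1) →
      cubRel G d (n + 1) x x' → cubRel G d (n + 1) y y' →
      cubRel G d (n + 1) (x * y) (x' * y')) ∧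
    (∀ x y : G (n + 1), x ∈ cubTilde G d (n + 1) → y ∈ cubTilde G d (n + 1) →
      ∀ z : G (n + 2), d (n + 1) 1 false z = x → d (n + 1) 2 true z = y →
        (∀ (j : ℕ) (ε : Bool), 1 ≤ j → j ≤ n + 2 →
          (j, ε) ≠ (1, false) → (j, ε) ≠ (1, true) → (j, ε) ≠ (2, true) →
          d (n + 1) j ε z = 1) →
        cubRel G d (n + 1) (d (n + 1) 1 true z) (x * y)) := by
  refine ⟨fun x x' y y' _ _ _ _ hxx' hyy' => hxx'.mul hyy', fun x y hx hy z hz₀ hz₂ hz => ?_⟩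
  have hz : IsProductFiller d n x y z :=
    ⟨hz₀, hz 2 false (by omega) (by omega) (by simp) (by simp) (by simp), hz₂,
      fun j ε hj hjn => hz j ε (by omega) hjn (by simp; omega) (by simp; omega) (by simp; omega)⟩
  obtain ⟨c, hc, hc₁⟩ := exists_isProductFiller_one_and_face_eq hdd hkan hy
  have h := cubRel_face_one_true_of_isProductFiller hdd hds_eq hds_gt hkan hx hy hz
    (hc.degen_mul hds_eq hds_gt hx)
  rwa [map_mul, hds_eq (n + 1) 1 true le_rfl (by omega), hc₁] at h

theorem stmt4 (G : ℕ → Type u) [∀ n, Monoid (G n)]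
    (d : ∀ n : ℕ, ℕ → Bool → (G (n + 1) →* G n))
    (s : ∀ n : ℕ, ℕ → (G n →* G (n + 1)))
    (hdd : ∀ (n i j : ℕ) (α ε : Bool), 1 ≤ i → i < j → j ≤ n + 2 →
      ∀ x, d n i α (d (n + 1) j ε x) = d n (j - 1) ε (d (n + 1) i α x))
    (hss : ∀ (n i j : ℕ), 1 ≤ i → i ≤ j → j ≤ n + 1 →
      ∀ x, s (n + 1) i (s n j x) = s (n + 1) (j + 1) (s n i x))
    (hds_lt : ∀ (n i j : ℕ) (α : Bool), 1 ≤ i → i < j → j ≤ n + 2 →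
      ∀ x, d (n + 1) i α (s (n + 1) j x) = s n (j - 1) (d n i α x))
    (hds_eq : ∀ (n i : ℕ) (α : Bool), 1 ≤ i → i ≤ n + 1 → ∀ x, d n i α (s n i x) = x)
    (hds_gt : ∀ (n i j : ℕ) (α : Bool), 1 ≤ j → j < i → i ≤ n + 2 →
      ∀ x, d (n + 1) i α (s (n + 1) j x) = s n j (d n (i - 1) α x))
    (hkan : IsKan G (fun n i ε x => d n i ε x)) (n : ℕ) :
    (∀ x x' y y' : G (n + 1),
      x ∈ cubTilde G d (n + 1) → x' ∈ cubTilde G d (n + 1) →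
      y ∈ cubTilde G d (n + 1) → y' ∈ cubTilde G d (n + 1) →
      cubRel G d (n + 1) x x' → cubRel G d (n + 1) y y' →
      cubRel G d (n + 1) (x * y) (x' * y')) ∧
    (∀ x y : G (n + 1), x ∈ cubTilde G d (n + 1) → y ∈ cubTilde G d (n + 1) →
      ∀ z : G (n + 2), d (n + 1) 1 false z = x → d (n + 1) 2 true z = y →
        (∀ (j : ℕ) (ε : Bool), 1 ≤ j → j ≤ n + 2 →
          (j, ε) ≠ (1, false) → (j, ε) ≠ (1, true) → (j, ε) ≠ (2, true) →
          d (n + 1) j ε z = 1) →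
        cubRel G d (n + 1) (d (n + 1) 1 true z) (x * y)) :=
  stmt4_general G d s hdd hds_eq hds_gt hkan n
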